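/- For x ≥ 1 and subsets S, S' of {1, …, x}, define w_S = b a^{s₁} b a^{s₂} ⋯ b a^{s_{|S|}} where s₁ < s₂ < ⋯ enumerates S. Then the length of w_S is at most (x+1)², and for every n ∈ {1, …, x}, the word w_S w_{S'} b contains the infix b a^n b twice if and only if n ∈ S ∩ S'. -/

import Mathlib

/-- Letters: `true` is `a`, `false` is `b`. `wordOf S` is the concatenation
`b a^{s₁} b a^{s₂} ⋯` over the increasing enumeration `s₁ < s₂ < ⋯` of `S`. -/
def wordOf (S : Finset ℕ) : List Bool :=
  (S.sort (· ≤ ·)).flatMap fun s => false :: List.replicate s true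

/-- The pattern `b a^n b`. -/
def pattern (n : ℕ) : List Bool :=
  false :: (List.replicate n true ++ [false])

/-- `pattern n` occurs (as an infix) at position `i` in `w`. -/
def OccursAt (p w : List Bool) (i : ℕ) : Prop :=
  p <+: w.drop i

namespace AuxDoubleInfix

def W (L : List ℕ) : List Bool :=
  (L.flatMap fun s => false :: List.replicate s true) ++ [false]

lemma W_cons (s : ℕ) (L : List ℕ) :
    W (s :: L) = false :: (List.replicate s true ++ W L) := by
  simp [W, List.flatMap_cons, List.append_assoc]

lemma W_exists (L : List ℕ) : ∃ t, W L = false :: t := by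
  cases L with
  | nil => exact ⟨[], rfl⟩
  | cons s L => exact ⟨_, W_cons s L⟩

lemma prefix_iff (n s : ℕ) (t : List Bool) :
    (List.replicate n true ++ [false]) <+: (List.replicate s true ++ (false :: t)) ↔ n = s := by
  induction n generalizing s with
  | zero =>
    cases s with
    | zero => simp
    | succ s =>
      simp only [List.replicate_zero, List.nil_append, List.replicate_succ, List.cons_append,
        List.cons_prefix_cons]
      simp
  | succ n ih =>
    cases s with
    | zero =>
      simp only [List.replicate_succ, List.cons_append, List.replicate_zero, List.nil_append,
        List.cons_prefix_cons]
      simp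
    | succ s =>
      simp only [List.replicate_succ, List.cons_append, List.cons_prefix_cons, true_and]
      rw [ih]
      omega

lemma occ_cons (n s : ℕ) (L : List ℕ) (i : ℕ) :
    OccursAt (pattern n) (W (s :: L)) i ↔
      (i = 0 ∧ n = s) ∨ ∃ j, i = s + 1 + j ∧ OccursAt (pattern n) (W L) j := by
  rw [W_cons]
  unfold OccursAt
  cases i with
  | zero =>
    simp only [List.drop_zero]
    obtain ⟨t, ht⟩ := W_exists L
    rw [ht, pattern, List.cons_prefix_cons, prefix_iff]
    constructor
    · rintro ⟨-, h⟩
      exact Or.inl ⟨by simp, h⟩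
    · rintro (⟨-, h⟩ | ⟨j, hj, -⟩)
      · exact ⟨rfl, h⟩
      · omega
  | succ k =>
    simp only [List.drop_succ_cons]
    by_cases hk : k < s
    · rw [List.drop_append_of_le_length (by simp; omega), List.drop_replicate]
      constructor
      · intro h
        exfalso
        have : s - k ≠ 0 := by omega
        obtain ⟨m, hm⟩ := Nat.exists_eq_succ_of_ne_zero this
        rw [hm, List.replicate_succ, List.cons_append, pattern, List.cons_prefix_cons] at h
        simp at h
      · rintro (⟨h, -⟩ | ⟨j, hj, -⟩) <;> omega
    · rw [List.drop_append, List.drop_replicate]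
      have h1 : s - k = 0 := by omega
      have h2 : (List.replicate s (true : Bool)).length = s := by simp
      rw [h1]
      simp only [List.replicate_zero, List.nil_append, h2]
      constructor
      · intro h
        exact Or.inr ⟨k - s, by omega, h⟩
      · rintro (⟨h, -⟩ | ⟨j, hj, hocc⟩)
        · omega
        · have : k - s = j := by omega
          rwa [this]

lemma occ_nil (n i : ℕ) : ¬ OccursAt (pattern n) (W []) i := by
  intro h
  have := h.length_le
  simp [pattern, W] at this
  omega

lemma one_occ (n : ℕ) (L : List ℕ) :
    (∃ i, OccursAt (pattern n) (W L) i) ↔ n ∈ L := by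
  induction L with
  | nil => simp [occ_nil]
  | cons s L ih =>
    simp only [List.mem_cons, ← ih]
    constructor
    · rintro ⟨i, hi⟩
      rw [occ_cons] at hi
      rcases hi with ⟨-, h⟩ | ⟨j, -, hj⟩
      · exact Or.inl h
      · exact Or.inr ⟨j, hj⟩
    · rintro (h | ⟨j, hj⟩)
      · exact ⟨0, (occ_cons n s L 0).2 (Or.inl ⟨rfl, h⟩)⟩
      · exact ⟨s + 1 + j, (occ_cons n s L _).2 (Or.inr ⟨j, rfl, hj⟩)⟩

lemma two_occ (n : ℕ) (L : List ℕ) :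
    (∃ i j, i ≠ j ∧ OccursAt (pattern n) (W L) i ∧ OccursAt (pattern n) (W L) j) ↔
      2 ≤ L.count n := by
  induction L with
  | nil => simp [occ_nil]
  | cons s L ih =>
    constructor
    · rintro ⟨i, j, hij, hi, hj⟩
      rw [occ_cons] at hi hj
      rcases hi with ⟨hi0, hns⟩ | ⟨i', hi', hocci⟩ <;>
        rcases hj with ⟨hj0, hns'⟩ | ⟨j', hj', hoccj⟩
      · omega
      · subst hns
        have h1 : 0 < L.count n := List.count_pos_iff.mpr ((one_occ n L).1 ⟨j', hoccj⟩)
        rw [List.count_cons_self]; omega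
      · subst hns'
        have h1 : 0 < L.count n := List.count_pos_iff.mpr ((one_occ n L).1 ⟨i', hocci⟩)
        rw [List.count_cons_self]; omega
      · have h2 : 2 ≤ L.count n := ih.1 ⟨i', j', by omega, hocci, hoccj⟩
        rw [List.count_cons]
        split <;> omega
    · intro h
      by_cases hns : n = s
      · subst hns
        rw [List.count_cons_self] at h
        have hmem : n ∈ L := List.count_pos_iff.mp (by omega)
        obtain ⟨j, hj⟩ := (one_occ n L).2 hmem
        refine ⟨0, n + 1 + j, by omega, ?_, ?_⟩
        · exact (occ_cons n n L 0).2 (Or.inl ⟨rfl, rfl⟩)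
        · exact (occ_cons n n L _).2 (Or.inr ⟨j, rfl, hj⟩)
      · rw [List.count_cons_of_ne (Ne.symm hns)] at h
        obtain ⟨i, j, hij, hi, hj⟩ := ih.2 h
        refine ⟨s + 1 + i, s + 1 + j, by omega, ?_, ?_⟩
        · exact (occ_cons n s L _).2 (Or.inr ⟨i, rfl, hi⟩)
        · exact (occ_cons n s L _).2 (Or.inr ⟨j, rfl, hj⟩)

end AuxDoubleInfix

/-- `|w_S| ≤ (x+1)²`, and for `n ∈ {1,…,x}`, the word `w_S w_{S'} b` contains
the infix `b a^n b` at two distinct positions iff `n ∈ S ∩ S'`. -/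
theorem wordOf_length_and_double_infix (x : ℕ) (hx : 1 ≤ x)
    (S S' : Finset ℕ) (hS : S ⊆ Finset.Icc 1 x) (hS' : S' ⊆ Finset.Icc 1 x) :
    (wordOf S).length ≤ (x + 1) ^ 2 ∧
    ∀ n ∈ Finset.Icc 1 x,
      ((∃ i j : ℕ, i ≠ j ∧ OccursAt (pattern n) (wordOf S ++ wordOf S' ++ [false]) i ∧
          OccursAt (pattern n) (wordOf S ++ wordOf S' ++ [false]) j) ↔
        n ∈ S ∩ S') := by
  constructor
  · -- length bound
    have hlen : (wordOf S).length = ∑ s ∈ S, (s + 1) := by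
      rw [wordOf, List.length_flatMap]
      have hperm := ((Finset.sort_perm_toList S (· ≤ ·)).map
        (List.length ∘ fun s => (false : Bool) :: List.replicate s true)).sum_eq
      refine hperm.trans ?_; rw [Finset.sum_map_toList]
      exact Finset.sum_congr rfl fun s _ => by simp [Nat.add_comm]
    rw [hlen]
    calc ∑ s ∈ S, (s + 1) ≤ ∑ s ∈ Finset.Icc 1 x, (s + 1) :=
          Finset.sum_le_sum_of_subset hS
      _ ≤ ∑ _s ∈ Finset.Icc 1 x, (x + 1) :=
          Finset.sum_le_sum fun s hs => by
            have := (Finset.mem_Icc.1 hs).2; omega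
      _ = x * (x + 1) := by simp [Nat.card_Icc, mul_comm]
      _ ≤ (x + 1) ^ 2 := by nlinarith
  · intro n hn
    have hW : wordOf S ++ wordOf S' ++ [false] =
        AuxDoubleInfix.W (S.sort (· ≤ ·) ++ S'.sort (· ≤ ·)) := by
      simp [wordOf, AuxDoubleInfix.W, List.flatMap_append, List.append_assoc]
    rw [hW, AuxDoubleInfix.two_occ, List.count_append]
    have hc1 : (S.sort (· ≤ ·)).count n ≤ 1 :=
      List.nodup_iff_count_le_one.1 (Finset.sort_nodup _ _) n
    have hc2 : (S'.sort (· ≤ ·)).count n ≤ 1 :=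
      List.nodup_iff_count_le_one.1 (Finset.sort_nodup _ _) n
    rw [Finset.mem_inter]
    constructor
    · intro h
      have h1 : 0 < (S.sort (· ≤ ·)).count n := by omega
      have h2 : 0 < (S'.sort (· ≤ ·)).count n := by omega
      rw [List.count_pos_iff, Finset.mem_sort] at h1 h2
      exact ⟨h1, h2⟩
    · rintro ⟨h1, h2⟩
      have h1' : 0 < (S.sort (· ≤ ·)).count n :=
        List.count_pos_iff.2 ((Finset.mem_sort _).2 h1)
      have h2' : 0 < (S'.sort (· ≤ ·)).count n :=
        List.count_pos_iff.2 ((Finset.mem_sort _).2 h2)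
      omega
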